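/- Let G be a graph with n ≥ 1 vertices and let M = M[IAS(G)]. Then the following are equivalent: (i) M is 2-connected, i.e. τ(M) ≥ 2; (ii) M is cyclically 2-connected, i.e. κ*(M) ≥ 2; (iii) M is vertically 2-connected, i.e. κ(M) ≥ 2; (iv) G is connected and n > 1. -/

import Mathlib

/-!
Over GF(2) the three columns of a vertex triple sum to zero and the `φ`-columns form a basis, so
`r(M) = n` and `λ(S) = dim (span S ∩ span (W - S))`; a `1`-separation of any kind is a set `S` with
`λ(S) = 0` and suitable non-degenerate sides.

If `G` is connected and `n > 1`, every vertex has a neighbour, so no column is zero. Then `S` cannot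
split a vertex triple, since one column of the triple would be the sum of two on the other side; so
`S = τ(X)`, and an edge from `x ∈ X` to `y ∉ X` would put the part of `χ(x)` outside `X` into both
spans. Hence `S = ∅` or `S = W`.

Conversely, a component `X` of a disconnected graph gives the `1`-separation `τ(X)`, and for `n = 1`
one of `χ(v)`, `ψ(v)` is a zero column `p`, with `{p}` a `1`-separation because its complement has
`2 > r(M)` elements.
-/

open scoped ENat

variable {V : Type*} [Fintype V] [DecidableEq V]

/-- The column of the matrix `IAS(G) = (I | A | A+I)` indexed by `(v, i)`:
`i = 0` gives `φ(v)` (identity column), `i = 1` gives `χ(v)` (column of `A`),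
`i = 2` gives `ψ(v)` (column of `A + I`). -/
def iasCol (A : Matrix V V (ZMod 2)) : V × Fin 3 → V → ZMod 2 :=
  fun p w =>
    if p.2 = 0 then (if w = p.1 then 1 else 0)
    else if p.2 = 1 then A w p.1
    else A w p.1 + (if w = p.1 then 1 else 0)

/-- The rank of a subset of the ground set `W(G) = V × Fin 3` of the isotropic
matroid: the GF(2)-rank of the corresponding set of columns. -/
noncomputable def iasRank (A : Matrix V V (ZMod 2)) (S : Set (V × Fin 3)) : ℕ :=
  Module.finrank (ZMod 2) (Submodule.span (ZMod 2) (iasCol A '' S))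

/-- The connectivity function `λ(S) = r(S) + r(W - S) - r(M)`. -/
noncomputable def iasLambda (A : Matrix V V (ZMod 2)) (S : Set (V × Fin 3)) : ℕ :=
  iasRank A S + iasRank A Sᶜ - iasRank A Set.univ

/-- Independence in the isotropic matroid. -/
def iasIndep (A : Matrix V V (ZMod 2)) (S : Set (V × Fin 3)) : Prop :=
  LinearIndependent (ZMod 2) (fun s : S => iasCol A s.1)

/-- Circuits of the isotropic matroid: minimal dependent sets. -/
def iasCircuit (A : Matrix V V (ZMod 2)) (C : Set (V × Fin 3)) : Prop :=
  ¬ iasIndep A C ∧ ∀ S ⊂ C, iasIndep A S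

/-- An ordinary `k`-separation: `λ(S) < k` and `|S|, |W - S| ≥ k`. -/
def OrdinarySep (A : Matrix V V (ZMod 2)) (k : ℕ) (S : Set (V × Fin 3)) : Prop :=
  0 < k ∧ iasLambda A S < k ∧ k ≤ S.ncard ∧ k ≤ Sᶜ.ncard

/-- A cyclic `k`-separation: `λ(S) < k` and both `S` and `W - S` are dependent. -/
def CyclicSep (A : Matrix V V (ZMod 2)) (k : ℕ) (S : Set (V × Fin 3)) : Prop :=
  0 < k ∧ iasLambda A S < k ∧ ¬ iasIndep A S ∧ ¬ iasIndep A Sᶜ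

/-- A vertical `k`-separation: `λ(S) < k` and `r(S), r(W - S) ≥ k`. -/
def VerticalSep (A : Matrix V V (ZMod 2)) (k : ℕ) (S : Set (V × Fin 3)) : Prop :=
  0 < k ∧ iasLambda A S < k ∧ k ≤ iasRank A S ∧ k ≤ iasRank A Sᶜ

/-- `τ(M) = min {k : M has an ordinary k-separation}`, with `min ∅ = ∞`. -/
noncomputable def iasTau (A : Matrix V V (ZMod 2)) : ℕ∞ :=
  sInf {k : ℕ∞ | ∃ m : ℕ, (m : ℕ∞) = k ∧ ∃ S, OrdinarySep A m S}

/-- `κ*(M) = min ({k : M has a cyclic k-separation} ∪ {|W| - r(M)})`. -/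
noncomputable def iasKappaStar (A : Matrix V V (ZMod 2)) : ℕ :=
  sInf ({k : ℕ | ∃ S, CyclicSep A k S} ∪ {3 * Fintype.card V - iasRank A Set.univ})

/-- `κ(M) = min ({k : M has a vertical k-separation} ∪ {r(M)})`. -/
noncomputable def iasKappa (A : Matrix V V (ZMod 2)) : ℕ :=
  sInf ({k : ℕ | ∃ S, VerticalSep A k S} ∪ {iasRank A Set.univ})

/-- The simple graph underlying a looped simple graph given by its adjacency matrix. -/
def toSimpleGraph (A : Matrix V V (ZMod 2)) : SimpleGraph V where
  Adj v w := v ≠ w ∧ A v w = 1 ∧ A w v = 1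
  symm := ⟨fun v w ⟨h1, h2, h3⟩ => ⟨Ne.symm h1, h3, h2⟩⟩
  loopless := ⟨fun v h => h.1 rfl⟩

/-- The open neighborhood `N_G(v)`. -/
def nbhd (A : Matrix V V (ZMod 2)) (v : V) : Set V := {u | u ≠ v ∧ A v u = 1}

/-- `v` is a pendant vertex: `N_G(v) = {w}` for some `w`. -/
def IsPendant (A : Matrix V V (ZMod 2)) (v : V) : Prop := ∃ w, nbhd A v = {w}

/-- `G` has a pair of twin vertices: `v ≠ w` with `N_G(v) - {w} = N_G(w) - {v}`. -/
def HasTwins (A : Matrix V V (ZMod 2)) : Prop :=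
  ∃ v w, v ≠ w ∧ nbhd A v \ {w} = nbhd A w \ {v}

/-- The cut-rank `c_G(X)`: the GF(2)-rank of the submatrix `A[V - X, X]`
(columns indexed by `X`, rows indexed by `V - X`). -/
noncomputable def cutRank (A : Matrix V V (ZMod 2)) (X : Set V) : ℕ :=
  Module.finrank (ZMod 2)
    (Submodule.span (ZMod 2) ((fun x : V => fun w : ↥(Xᶜ) => A w.1 x) '' X))

/-- `τ_G(X) = ⋃_{x ∈ X} τ_G(x)`, the union of the vertex triples of members of `X`. -/
def tauSet (X : Set V) : Set (V × Fin 3) := {p | p.1 ∈ X}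

/-- Loop complementation at `v`. -/
def loopComp (A : Matrix V V (ZMod 2)) (v : V) : Matrix V V (ZMod 2) :=
  fun x y => A x y + if x = v ∧ y = v then 1 else 0

/-- Simple local complementation at `v`. -/
def simpleLocalComp (A : Matrix V V (ZMod 2)) (v : V) : Matrix V V (ZMod 2) :=
  fun x y => A x y +
    if x ≠ y ∧ (x ≠ v ∧ A v x = 1) ∧ (y ≠ v ∧ A v y = 1) then 1 else 0

/-- Non-simple local complementation at `v`. -/
def nonSimpleLocalComp (A : Matrix V V (ZMod 2)) (v : V) : Matrix V V (ZMod 2) :=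
  fun x y => simpleLocalComp A v x y + if x = y ∧ x ≠ v ∧ A v x = 1 then 1 else 0

/-- One local move. -/
def LocalStep (A B : Matrix V V (ZMod 2)) : Prop :=
  ∃ v, B = loopComp A v ∨ B = simpleLocalComp A v ∨ B = nonSimpleLocalComp A v

/-- Local equivalence: a finite sequence of loop complementations and
(simple or non-simple) local complementations. -/
def LocallyEquiv (A B : Matrix V V (ZMod 2)) : Prop :=
  Relation.ReflTransGen LocalStep A B

/-- `G` has a split: a bipartition `(V₁, V₂)` of `V` with `|V₁|, |V₂| ≥ 2` such that the
GF(2)-rank of `A[V₁, V₂]` is at most 1. -/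
def HasSplit (A : Matrix V V (ZMod 2)) : Prop :=
  ∃ X : Set V, 2 ≤ X.ncard ∧ 2 ≤ Xᶜ.ncard ∧ cutRank A X ≤ 1

/-- A transverse circuit: a circuit of the isotropic matroid meeting each
vertex triple at most once. -/
def IsTransverseCircuit (A : Matrix V V (ZMod 2)) (C : Set (V × Fin 3)) : Prop :=
  iasCircuit A C ∧ ∀ p ∈ C, ∀ q ∈ C, p.1 = q.1 → p = q

/-- An isotropic `k`-separation of `G`: `|X|, |V - X| ≥ k` and `c_G(X) < k`. -/
def IsotropicSep (A : Matrix V V (ZMod 2)) (k : ℕ) (X : Set V) : Prop :=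
  k ≤ X.ncard ∧ k ≤ Xᶜ.ncard ∧ cutRank A X < k

/-- The isotropic connectivity `κ_B(G)`, with `min ∅ = ∞`. -/
noncomputable def kappaB (A : Matrix V V (ZMod 2)) : ℕ∞ :=
  sInf {j : ℕ∞ | ∃ k : ℕ, (k : ℕ∞) = j ∧ ∃ X, IsotropicSep A k X}

/-- The 5-cycle `C₅`. -/
def C5mat : Matrix (Fin 5) (Fin 5) (ZMod 2) :=
  fun i j => if (i.val + 1) % 5 = j.val ∨ (j.val + 1) % 5 = i.val then 1 else 0

/-- The wheel `W₅` : a 5-cycle on `{0,…,4}` plus a hub `5` adjacent to all. -/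
def W5mat : Matrix (Fin 6) (Fin 6) (ZMod 2) :=
  fun i j =>
    if (i.val = 5 ∧ j.val ≠ 5) ∨ (j.val = 5 ∧ i.val ≠ 5) then 1
    else if i.val ≠ 5 ∧ j.val ≠ 5 ∧ ((i.val + 1) % 5 = j.val ∨ (j.val + 1) % 5 = i.val) then 1
    else 0

open Submodule

omit [Fintype V] [DecidableEq V] in
lemma compl_tauSet (X : Set V) : (tauSet X)ᶜ = tauSet Xᶜ := rfl

section Columns

variable (A : Matrix V V (ZMod 2))

omit [Fintype V] in
lemma sum_iasCol_eq_zero (v : V) : ∑ i, iasCol A (v, i) = 0 := by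
  funext w
  simp only [Fin.sum_univ_three, iasCol, Finset.sum_apply, Pi.zero_apply]
  generalize (if w = v then (1 : ZMod 2) else 0) = x
  generalize A w v = y
  revert x y
  decide

omit [Fintype V] in
lemma iasCol_eq_add_of_ne {i j k : Fin 3} (hij : i ≠ j) (hik : i ≠ k) (hjk : j ≠ k) (v : V) :
    iasCol A (v, i) = iasCol A (v, j) + iasCol A (v, k) := by
  funext w
  simp only [iasCol, Pi.add_apply]
  generalize (if w = v then (1 : ZMod 2) else 0) = x
  generalize A w v = y
  revert i j k x y
  decide

omit [Fintype V] in
lemma iasCol_zero_ne_zero (v : V) : iasCol A (v, 0) ≠ 0 := fun h => by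
  simpa [iasCol] using congrFun h v

lemma pi_bot_le_span_tauSet (Y : Set V) :
    pi Yᶜ (fun _ => ⊥) ≤ span (ZMod 2) (iasCol A '' tauSet Y) := by
  intro f hf
  rw [pi_eq_sum_univ f]
  refine sum_mem fun w _ => ?_
  by_cases hw : w ∈ Y
  · refine smul_mem _ _ (subset_span ⟨(w, 0), hw, ?_⟩)
    funext u
    simp [iasCol, eq_comm]
  · simp [(mem_bot _).1 ((mem_pi).1 hf w hw)]

lemma span_iasCol_univ : span (ZMod 2) (iasCol A '' Set.univ) = ⊤ :=
  eq_top_iff.2 fun f _ => pi_bot_le_span_tauSet A Set.univ (by simp)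

lemma iasRank_univ : iasRank A Set.univ = Fintype.card V := by
  rw [iasRank, span_iasCol_univ, finrank_top, Module.finrank_fintype_fun_eq_card]

lemma iasRank_le_card (S : Set (V × Fin 3)) : iasRank A S ≤ Fintype.card V :=
  iasRank_univ A ▸ finrank_mono (span_mono (Set.image_mono (Set.subset_univ S)))

lemma iasLambda_eq_zero_iff (S : Set (V × Fin 3)) :
    iasLambda A S = 0 ↔
      Disjoint (span (ZMod 2) (iasCol A '' S)) (span (ZMod 2) (iasCol A '' Sᶜ)) := by
  have hsup : span (ZMod 2) (iasCol A '' S) ⊔ span (ZMod 2) (iasCol A '' Sᶜ) = ⊤ := by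
    rw [← span_union, ← Set.image_union, Set.union_compl_self, span_iasCol_univ]
  have h := finrank_sup_add_finrank_inf_eq (span (ZMod 2) (iasCol A '' S))
    (span (ZMod 2) (iasCol A '' Sᶜ))
  rw [hsup, finrank_top, Module.finrank_fintype_fun_eq_card] at h
  rw [iasLambda, iasRank, iasRank, iasRank_univ, ← h, Nat.add_sub_cancel_left,
    finrank_eq_zero, disjoint_iff]

omit [Fintype V] in
lemma iasRank_empty : iasRank A ∅ = 0 := by
  rw [iasRank, Set.image_empty, span_empty, finrank_bot]

end Columns

section Dependence

variable {A : Matrix V V (ZMod 2)} {S : Set (V × Fin 3)}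

omit [Fintype V] in
lemma not_iasIndep_of_iasCol_eq_zero {p : V × Fin 3} (hp : p ∈ S) (h : iasCol A p = 0) :
    ¬ iasIndep A S :=
  fun hS => hS.ne_zero ⟨p, hp⟩ h

omit [Fintype V] in
lemma not_iasIndep_of_forall_mem {v : V} (hv : ∀ i, (v, i) ∈ S) : ¬ iasIndep A S := by
  intro hS
  have htriple := hS.comp (fun i => ⟨(v, i), hv i⟩) fun i j hij => by simpa using hij
  exact one_ne_zero (Fintype.linearIndependent_iff.1 htriple (fun _ => 1)
    (by simpa using sum_iasCol_eq_zero A v) 0)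

lemma not_iasIndep_of_card_lt (h : Fintype.card V < S.ncard) : ¬ iasIndep A S := by
  intro hS
  have := hS.cardinalMk_le_finrank
  rw [← Nat.cast_card, Nat.card_coe_set_eq, Nat.cast_le,
    Module.finrank_fintype_fun_eq_card] at this
  omega

lemma one_le_iasRank_of_mem {p : V × Fin 3} (hp : p ∈ S) (h : iasCol A p ≠ 0) :
    1 ≤ iasRank A S := by
  rw [Nat.one_le_iff_ne_zero, iasRank, Ne, finrank_eq_zero, span_eq_bot]
  exact fun h' => h (h' _ ⟨p, hp, rfl⟩)

end Dependence

section Connected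

variable {A : Matrix V V (ZMod 2)}

omit [Fintype V] in
lemma iasCol_ne_zero_of_adj {v u : V} (h : (toSimpleGraph A).Adj v u) (i : Fin 3) :
    iasCol A (v, i) ≠ 0 := by
  intro h0
  have hu := congrFun h0 u
  fin_cases i
  · exact iasCol_zero_ne_zero A v h0
  · simp [iasCol, h.2.2] at hu
  · simp [iasCol, h.2.2, h.1.symm] at hu

omit [Fintype V] in
lemma mem_of_mem_of_disjoint_span {S : Set (V × Fin 3)}
    (hS : Disjoint (span (ZMod 2) (iasCol A '' S)) (span (ZMod 2) (iasCol A '' Sᶜ)))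
    (hnz : ∀ p, iasCol A p ≠ 0) {v : V} {i : Fin 3} (hi : (v, i) ∈ S) (j : Fin 3) :
    (v, j) ∈ S := by
  by_contra hj
  have hij : i ≠ j := by rintro rfl; exact hj hi
  have third : ∀ i j : Fin 3, ∃ k, k ≠ i ∧ k ≠ j := by decide
  obtain ⟨k, hki, hkj⟩ := third i j
  have mem {T : Set (V × Fin 3)} {p} (hp : p ∈ T) : iasCol A p ∈ span (ZMod 2) (iasCol A '' T) :=
    subset_span ⟨p, hp, rfl⟩
  by_cases hk : (v, k) ∈ S
  · refine hnz (v, j) (disjoint_def.1 hS _ ?_ (mem hj))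
    rw [iasCol_eq_add_of_ne A hij.symm hkj.symm hki.symm]
    exact add_mem (mem hi) (mem hk)
  · refine hnz (v, i) (disjoint_def.1 hS _ (mem hi) ?_)
    rw [iasCol_eq_add_of_ne A hij hki.symm hkj.symm]
    exact add_mem (mem hj) (mem hk)

lemma iasCol_ne_zero_of_connected (hc : (toSimpleGraph A).Connected)
    (h2 : 1 < Fintype.card V) (p : V × Fin 3) : iasCol A p ≠ 0 := by
  obtain ⟨v, i⟩ := p
  obtain ⟨w, hw⟩ := Fintype.exists_ne_of_one_lt_card h2 v
  obtain ⟨d, -, hdv, -⟩ := (hc.preconnected v w).some.exists_boundary_dart {v} rfl hw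
  rw [← Set.mem_singleton_iff.1 hdv]
  exact iasCol_ne_zero_of_adj d.adj i

lemma apply_eq_zero_of_disjoint_span_tauSet {X : Set V}
    (hX : Disjoint (span (ZMod 2) (iasCol A '' tauSet X)) (span (ZMod 2) (iasCol A '' tauSet Xᶜ)))
    {x y : V} (hx : x ∈ X) (hy : y ∉ X) : A y x = 0 := by
  classical
  set g : V → ZMod 2 := fun u => if u ∈ X then 0 else A u x
  -- `g` is the part of `χ(x)` outside `X`, and `χ(x) - g` is a combination of the `φ(u)`, `u ∈ X`
  have hgc : g ∈ span (ZMod 2) (iasCol A '' tauSet Xᶜ) :=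
    pi_bot_le_span_tauSet A Xᶜ (mem_pi.2 fun u hu => (mem_bot (ZMod 2)).2 (if_pos (not_not.1 hu)))
  have hg : g ∈ span (ZMod 2) (iasCol A '' tauSet X) := by
    have hrest : (fun u => if u ∈ X then A u x else 0) ∈ span (ZMod 2) (iasCol A '' tauSet X) :=
      pi_bot_le_span_tauSet A X (mem_pi.2 fun u hu => (mem_bot (ZMod 2)).2 (if_neg hu))
    have hsplit : g = iasCol A (x, 1) - fun u => if u ∈ X then A u x else 0 := by
      funext u
      by_cases hu : u ∈ X <;> simp [g, iasCol, hu]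
    rw [hsplit]
    exact sub_mem (subset_span ⟨(x, 1), hx, rfl⟩) hrest
  simpa [g, hy] using congrFun (disjoint_def.1 hX g hg hgc) y

lemma eq_empty_or_univ_of_iasLambda_eq_zero (hc : (toSimpleGraph A).Connected)
    (h2 : 1 < Fintype.card V) {S : Set (V × Fin 3)} (hS : iasLambda A S = 0) :
    S = ∅ ∨ S = Set.univ := by
  rw [iasLambda_eq_zero_iff] at hS
  have hnz := iasCol_ne_zero_of_connected hc h2
  set X : Set V := {v | (v, 0) ∈ S}
  have hSX : S = tauSet X := by
    ext ⟨v, i⟩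
    exact ⟨fun h => mem_of_mem_of_disjoint_span hS hnz h 0,
      fun h => mem_of_mem_of_disjoint_span hS hnz h i⟩
  rw [hSX] at hS ⊢
  rcases X.eq_empty_or_nonempty with hXe | ⟨x, hx⟩
  · left; simp [hXe, tauSet]
  by_cases hXu : X = Set.univ
  · right; simp [hXu, tauSet]
  obtain ⟨y, hy⟩ := (Set.ne_univ_iff_exists_notMem X).1 hXu
  obtain ⟨d, -, hdx, hdy⟩ := (hc.preconnected x y).some.exists_boundary_dart X hx hy
  exact absurd d.adj.2.2 (by simp [apply_eq_zero_of_disjoint_span_tauSet hS hdx hdy])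

end Connected

section Disconnected

variable {A : Matrix V V (ZMod 2)}

omit [Fintype V] in
lemma span_tauSet_le_pi_bot {X : Set V} (hX : ∀ x ∈ X, ∀ y ∉ X, A y x = 0) :
    span (ZMod 2) (iasCol A '' tauSet X) ≤ pi Xᶜ (fun _ => ⊥) := by
  rw [span_le]
  rintro _ ⟨⟨v, i⟩, hv, rfl⟩
  refine mem_pi.2 fun w hw => (mem_bot (ZMod 2)).2 ?_
  have hwv : w ≠ v := by rintro rfl; exact hw hv
  fin_cases i <;> simp [iasCol, hwv, hX v hv w hw]

lemma iasLambda_tauSet_eq_zero (hA : A.IsSymm) {X : Set V}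
    (hX : ∀ x ∈ X, ∀ y ∉ X, ¬ (toSimpleGraph A).Adj x y) : iasLambda A (tauSet X) = 0 := by
  have hcross : ∀ x ∈ X, ∀ y ∉ X, A y x = 0 := by
    intro x hx y hy
    have hxy : x ≠ y := by rintro rfl; exact hy hx
    have hyx : A y x ≠ 1 := fun h => hX x hx y hy ⟨hxy, (hA.apply x y).symm.trans h, h⟩
    generalize A y x = a at hyx ⊢
    revert a; decide
  have hcross' : ∀ x ∈ Xᶜ, ∀ y ∉ Xᶜ, A y x = 0 := fun x hx y hy =>
    (hA.apply x y).trans (hcross y (not_not.1 hy) x hx)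
  have hdisj : Disjoint (pi Xᶜ fun _ => (⊥ : Submodule (ZMod 2) (ZMod 2))) (pi Xᶜᶜ fun _ => ⊥) := by
    refine disjoint_def.2 fun f hf hfc => funext fun w => ?_
    by_cases hw : w ∈ X
    · exact (mem_bot (ZMod 2)).1 (mem_pi.1 hfc w (not_not.2 hw))
    · exact (mem_bot (ZMod 2)).1 (mem_pi.1 hf w hw)
  rw [iasLambda_eq_zero_iff, compl_tauSet]
  exact hdisj.mono (span_tauSet_le_pi_bot hcross) (span_tauSet_le_pi_bot hcross')

lemma sep_one_of_forall_mem {S : Set (V × Fin 3)} (hS : iasLambda A S = 0) {v w : V}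
    (hv : ∀ i, (v, i) ∈ S) (hw : ∀ i, (w, i) ∈ Sᶜ) :
    OrdinarySep A 1 S ∧ CyclicSep A 1 S ∧ VerticalSep A 1 S := by
  have hlt : iasLambda A S < 1 := by omega
  have card_pos {T : Set (V × Fin 3)} {u : V} (hu : (u, 0) ∈ T) : 1 ≤ T.ncard :=
    (Set.ncard_pos (Set.toFinite T)).2 ⟨_, hu⟩
  exact ⟨⟨one_pos, hlt, card_pos (hv 0), card_pos (hw 0)⟩,
    ⟨one_pos, hlt, not_iasIndep_of_forall_mem hv, not_iasIndep_of_forall_mem hw⟩,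
    ⟨one_pos, hlt, one_le_iasRank_of_mem (hv 0) (iasCol_zero_ne_zero A v),
      one_le_iasRank_of_mem (hw 0) (iasCol_zero_ne_zero A w)⟩⟩

lemma exists_sep_one_of_not_connected (hA : A.IsSymm) [Nonempty V]
    (hc : ¬ (toSimpleGraph A).Connected) :
    ∃ S, OrdinarySep A 1 S ∧ CyclicSep A 1 S ∧ VerticalSep A 1 S := by
  obtain ⟨v, w, hvw⟩ : ∃ v w, ¬ (toSimpleGraph A).Reachable v w := by
    simpa [SimpleGraph.connected_iff, SimpleGraph.Preconnected] using hc
  set X : Set V := {u | (toSimpleGraph A).Reachable v u}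
  have hX : ∀ x ∈ X, ∀ y ∉ X, ¬ (toSimpleGraph A).Adj x y := fun x hx y hy hxy =>
    hy (SimpleGraph.Reachable.trans hx hxy.reachable)
  exact ⟨tauSet X, sep_one_of_forall_mem (iasLambda_tauSet_eq_zero hA hX)
    (fun _ => SimpleGraph.Reachable.refl v) (fun _ => hvw)⟩

end Disconnected

section Loop

variable {A : Matrix V V (ZMod 2)}

lemma sep_one_singleton_of_iasCol_eq_zero (hn : 1 ≤ Fintype.card V) {p : V × Fin 3}
    (hp : iasCol A p = 0) : OrdinarySep A 1 {p} ∧ CyclicSep A 1 {p} := by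
  have hrank : iasRank A {p} = 0 := by
    rw [iasRank, Set.image_singleton, hp, span_zero_singleton, finrank_bot]
  have hlt : iasLambda A {p} < 1 := by
    have := iasRank_le_card A {p}ᶜ
    rw [iasLambda, hrank, iasRank_univ]
    omega
  have hcard : ({p}ᶜ : Set (V × Fin 3)).ncard = 3 * Fintype.card V - 1 := by
    have := Set.ncard_add_ncard_compl {p}
    rw [Set.ncard_singleton, Nat.card_eq_fintype_card, Fintype.card_prod, Fintype.card_fin] at this
    omega
  exact ⟨⟨one_pos, hlt, by simp, by omega⟩,
    ⟨one_pos, hlt, not_iasIndep_of_iasCol_eq_zero rfl hp, not_iasIndep_of_card_lt (by omega)⟩⟩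

lemma exists_iasCol_eq_zero_of_card_eq_one (h : Fintype.card V = 1) : ∃ p, iasCol A p = 0 := by
  obtain ⟨v, hv⟩ := Fintype.card_eq_one_iff.1 h
  have : A v v = 0 ∨ A v v + 1 = 0 := by
    generalize A v v = a
    revert a; decide
  rcases this with h0 | h0
  · exact ⟨(v, 1), funext fun w => by rw [hv w]; simpa [iasCol] using h0⟩
  · exact ⟨(v, 2), funext fun w => by rw [hv w]; simpa [iasCol] using h0⟩

end Loop

lemma Nat.le_sInf_union_singleton_iff {T : Set ℕ} {a b : ℕ} :
    b ≤ sInf (T ∪ {a}) ↔ (∀ k ∈ T, b ≤ k) ∧ b ≤ a := by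
  rw [le_csInf_iff' (Set.union_nonempty.2 (Or.inr (Set.singleton_nonempty a))),
    lowerBounds_union, lowerBounds_singleton]
  rfl

section Connectivity

variable {A : Matrix V V (ZMod 2)} {S : Set (V × Fin 3)} {k : ℕ}

lemma exists_ordinarySep_cyclicSep_one (hA : A.IsSymm) (hn : 1 ≤ Fintype.card V)
    (hP : ¬ ((toSimpleGraph A).Connected ∧ 1 < Fintype.card V)) :
    ∃ S, OrdinarySep A 1 S ∧ CyclicSep A 1 S := by
  by_cases hc : (toSimpleGraph A).Connected
  · obtain ⟨p, hp⟩ := exists_iasCol_eq_zero_of_card_eq_one (A := A)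
      (le_antisymm (not_lt.1 fun h2 => hP ⟨hc, h2⟩) hn)
    exact ⟨{p}, sep_one_singleton_of_iasCol_eq_zero hn hp⟩
  · have : Nonempty V := Fintype.card_pos_iff.1 hn
    obtain ⟨S, hord, hcyc, -⟩ := exists_sep_one_of_not_connected hA hc
    exact ⟨S, hord, hcyc⟩

lemma two_le_of_ordinarySep (hc : (toSimpleGraph A).Connected) (h2 : 1 < Fintype.card V)
    (hS : OrdinarySep A k S) : 2 ≤ k := by
  obtain ⟨hk, hlt, hcard, hcard'⟩ := hS
  by_contra hk2
  rcases eq_empty_or_univ_of_iasLambda_eq_zero hc h2 (by omega : iasLambda A S = 0) with rfl | rfl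
  · rw [Set.ncard_empty] at hcard; omega
  · rw [Set.compl_univ, Set.ncard_empty] at hcard'; omega

lemma two_le_of_cyclicSep (hc : (toSimpleGraph A).Connected) (h2 : 1 < Fintype.card V)
    (hS : CyclicSep A k S) : 2 ≤ k := by
  obtain ⟨hk, hlt, hdep, hdep'⟩ := hS
  by_contra hk2
  rcases eq_empty_or_univ_of_iasLambda_eq_zero hc h2 (by omega : iasLambda A S = 0) with rfl | rfl
  · exact hdep linearIndependent_empty_type
  · rw [Set.compl_univ] at hdep'
    exact hdep' linearIndependent_empty_type

lemma two_le_of_verticalSep (hc : (toSimpleGraph A).Connected) (h2 : 1 < Fintype.card V)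
    (hS : VerticalSep A k S) : 2 ≤ k := by
  obtain ⟨hk, hlt, hrank, hrank'⟩ := hS
  by_contra hk2
  rcases eq_empty_or_univ_of_iasLambda_eq_zero hc h2 (by omega : iasLambda A S = 0) with rfl | rfl
  · rw [iasRank_empty] at hrank; omega
  · rw [Set.compl_univ, iasRank_empty] at hrank'; omega

theorem two_le_iasTau_iff (hA : A.IsSymm) (hn : 1 ≤ Fintype.card V) :
    2 ≤ iasTau A ↔ (toSimpleGraph A).Connected ∧ 1 < Fintype.card V := by
  refine ⟨fun h => ?_, fun ⟨hc, h2⟩ => le_sInf ?_⟩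
  · by_contra hP
    obtain ⟨S, hS, -⟩ := exists_ordinarySep_cyclicSep_one hA hn hP
    have := h.trans (sInf_le ⟨1, rfl, S, hS⟩)
    norm_num at this
  · rintro _ ⟨k, rfl, S, hS⟩
    exact_mod_cast two_le_of_ordinarySep hc h2 hS

theorem two_le_iasKappaStar_iff (hA : A.IsSymm) (hn : 1 ≤ Fintype.card V) :
    2 ≤ iasKappaStar A ↔ (toSimpleGraph A).Connected ∧ 1 < Fintype.card V := by
  rw [iasKappaStar, Nat.le_sInf_union_singleton_iff, iasRank_univ]
  refine ⟨fun h => ?_, fun ⟨hc, h2⟩ => ⟨fun k ⟨S, hS⟩ => two_le_of_cyclicSep hc h2 hS, by omega⟩⟩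
  by_contra hP
  obtain ⟨S, -, hS⟩ := exists_ordinarySep_cyclicSep_one hA hn hP
  exact absurd (h.1 1 ⟨S, hS⟩) (by norm_num)

theorem two_le_iasKappa_iff (hA : A.IsSymm) (hn : 1 ≤ Fintype.card V) :
    2 ≤ iasKappa A ↔ (toSimpleGraph A).Connected ∧ 1 < Fintype.card V := by
  rw [iasKappa, Nat.le_sInf_union_singleton_iff, iasRank_univ]
  refine ⟨fun ⟨h, h2⟩ => ⟨by_contra fun hc => ?_, h2⟩,
    fun ⟨hc, h2⟩ => ⟨fun k ⟨S, hS⟩ => two_le_of_verticalSep hc h2 hS, h2⟩⟩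
  have : Nonempty V := Fintype.card_pos_iff.1 hn
  obtain ⟨S, -, -, hS⟩ := exists_sep_one_of_not_connected hA hc
  exact absurd (h 1 ⟨S, hS⟩) (by norm_num)

end Connectivity

theorem stmt0 (A : Matrix V V (ZMod 2)) (hA : A.IsSymm) (hn : 1 ≤ Fintype.card V) :
    List.TFAE [2 ≤ iasTau A, 2 ≤ iasKappaStar A, 2 ≤ iasKappa A,
      (toSimpleGraph A).Connected ∧ 1 < Fintype.card V] := by
  tfae_have 1 ↔ 4 := two_le_iasTau_iff hA hn
  tfae_have 2 ↔ 4 := two_le_iasKappaStar_iff hA hn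
  tfae_have 3 ↔ 4 := two_le_iasKappa_iff hA hn
  tfae_finish
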